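/- Let L ≥ 1 be a natural number and Z ∈ ℝ^L a fixed vector (of population Fisher-transformed partial correlations). For each n ∈ ℕ let (Ω_n, P_n) be a probability space carrying a random vector Ẑ_n : Ω_n → ℝ^L and a family (G_{n,m})_{m∈ℕ} of ℝ^L-valued random vectors whose coordinates are i.i.d. standard Gaussian N(0,1) and such that (G_{n,m})_m is independent of Ẑ_n; define the resampled statistics Ẑ_n^{[m]} := Ẑ_n + G_{n,m}. Assume that for every coordinate l and every z > 0, limsup_{n→∞} P_n( |Ẑ_{n,l} − Z_l| ≥ z ) ≤ 2(1 − Φ(z)). Fix ν with 0 < ν ≤ 1/2, let z_ν > 0 satisfy Φ(z_ν) = 1 − ν/(2L), and set c(ν) := (2π)^{−L/2} exp(−(L/2) z_ν²) and err_n(M, ν) := (1/2) (2 log n / (c(ν) M))^{1/L}. Then liminf_{n→∞} liminf_{M→∞} P_n( min_{1≤m≤M} max_{1≤l≤L} |Ẑ_{n,l}^{[m]} − Z_l| ≤ err_n(M, ν) ) ≥ 1 − ν. -/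

import Mathlib

open MeasureTheory ProbabilityTheory Real Filter

/-- The cumulative distribution function of the standard Gaussian measure `N(0,1)` on `ℝ`. -/
noncomputable def stdGaussianCDF (x : ℝ) : ℝ :=
  ProbabilityTheory.cdf (ProbabilityTheory.gaussianReal 0 1) x

open Set

/-! Fix a radius `r` and a threshold `t`. If `Ẑ` lies within `s` of `Z` in every coordinate and
`s + r ≤ t`, the box of half-width `r` that a resample `Ẑ + G_m` must hit lies inside `[-t, t]^L`,
where the Gaussian density is at least `φ(t)`; so each resample hits with probability at least
`q = (2 r φ(t))^L`, and by independence all `M` of them miss with probability at most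
`(1 - q)^M ≤ exp (-q M)`. With `t = z_ν` and `r = err_n(M, ν)` one has `q M = 2 log n` exactly,
and `r → 0` as `M → ∞`, so every `s < z_ν` is eventually admissible. A union bound over the
coordinates and the tail hypothesis then give coverage at least `1 - 2 L (1 - Φ(s))` in the
limit, and this tends to `1 - ν` as `s ↑ z_ν` because `Φ` is `1`-Lipschitz. -/

lemma gaussianPDFReal_le_of_abs_sub_le {μ : ℝ} {v : NNReal} {s t : ℝ} (h : |s - μ| ≤ |t - μ|) :
    gaussianPDFReal μ v t ≤ gaussianPDFReal μ v s := by
  have hsq : (s - μ) ^ 2 ≤ (t - μ) ^ 2 := sq_le_sq.mpr h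
  simp only [gaussianPDFReal]
  gcongr

lemma gaussianPDFReal_zero_one_le_one (x : ℝ) : gaussianPDFReal 0 1 x ≤ 1 := by
  calc gaussianPDFReal 0 1 x ≤ gaussianPDFReal 0 1 0 :=
        gaussianPDFReal_le_of_abs_sub_le (by simp)
    _ = (√(2 * π))⁻¹ := by simp [gaussianPDFReal]
    _ ≤ 1 := inv_le_one_of_one_le₀ (one_le_sqrt.mpr (by linarith [pi_gt_three]))

lemma rpow_two_pi_mul_exp_eq_gaussianPDFReal_pow (L : ℕ) (x : ℝ) :
    (2 * π) ^ (-(L : ℝ) / 2) * exp (-((L : ℝ) / 2) * x ^ 2) = gaussianPDFReal 0 1 x ^ L := by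
  rw [gaussianPDFReal, mul_pow, ← exp_nat_mul, sqrt_eq_rpow, ← rpow_neg (by positivity),
    ← rpow_mul_natCast (by positivity)]
  congr 2 <;> push_cast <;> ring

lemma ofReal_mul_volume_le_gaussianReal {μ : ℝ} {v : NNReal} {s : Set ℝ} {b : ℝ}
    (hb : ∀ x ∈ s, b ≤ gaussianPDFReal μ v x) (hv : v ≠ 0) :
    ENNReal.ofReal b * volume s ≤ gaussianReal μ v s := by
  rw [gaussianReal_apply μ hv, ← setLIntegral_const]
  exact setLIntegral_mono (measurable_gaussianPDF μ v) fun x hx =>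
    ENNReal.ofReal_le_ofReal (hb x hx)

lemma gaussianReal_le_ofReal_mul_volume {μ : ℝ} {v : NNReal} {s : Set ℝ} {b : ℝ}
    (hb : ∀ x, gaussianPDFReal μ v x ≤ b) (hv : v ≠ 0) :
    gaussianReal μ v s ≤ ENNReal.ofReal b * volume s := by
  rw [gaussianReal_apply μ hv, ← setLIntegral_const]
  exact setLIntegral_mono measurable_const fun x _ => ENNReal.ofReal_le_ofReal (hb x)

lemma stdGaussianCDF_sub_le {x y : ℝ} (h : y ≤ x) :
    stdGaussianCDF x - stdGaussianCDF y ≤ x - y := by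
  have hIoc : ENNReal.ofReal (stdGaussianCDF x - stdGaussianCDF y) =
      gaussianReal 0 1 (Ioc y x) := by
    rw [← measure_cdf (gaussianReal 0 1), StieltjesFunction.measure_Ioc]; rfl
  have := hIoc ▸ gaussianReal_le_ofReal_mul_volume (s := Ioc y x)
    gaussianPDFReal_zero_one_le_one one_ne_zero
  rwa [volume_Ioc, ENNReal.ofReal_one, one_mul, ENNReal.ofReal_le_ofReal_iff (by linarith)] at this

lemma one_sub_le_of_forall_lt_of_stdGaussianCDF_eq {k ν z b : ℝ} (hk : 0 < k) (hz : 0 < z)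
    (hΦz : stdGaussianCDF z = 1 - ν / (2 * k))
    (h : ∀ s ∈ Ioo 0 z, 1 - k * (2 * (1 - stdGaussianCDF s)) ≤ b) : 1 - ν ≤ b := by
  have hlipschitz : ∀ s ≤ z, 1 - ν - 2 * k * (z - s) ≤ 1 - k * (2 * (1 - stdGaussianCDF s)) := by
    intro s hs
    have hΦ := mul_le_mul_of_nonneg_left (hΦz ▸ stdGaussianCDF_sub_le hs) hk.le
    have hkν : k * (ν / (2 * k)) = ν / 2 := by field_simp
    linarith
  have hlimit :
      Tendsto (fun s => 1 - ν - 2 * k * (z - s)) (nhdsWithin z (Iio z)) (nhds (1 - ν)) := by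
    have := (by fun_prop : Continuous fun s : ℝ => 1 - ν - 2 * k * (z - s)).tendsto z
    simpa using this.mono_left nhdsWithin_le_nhds
  exact le_of_tendsto hlimit <| by
    filter_upwards [Ioo_mem_nhdsLT hz] with s hs using (hlipschitz s hs.2.le).trans (h s hs)

lemma ofReal_le_gaussianReal_Icc {a r t : ℝ} (h : |a| + r ≤ t) :
    ENNReal.ofReal (2 * r * gaussianPDFReal 0 1 t) ≤ gaussianReal 0 1 (Icc (a - r) (a + r)) := by
  have hb : ∀ x ∈ Icc (a - r) (a + r), gaussianPDFReal 0 1 t ≤ gaussianPDFReal 0 1 x := by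
    intro x hx
    apply gaussianPDFReal_le_of_abs_sub_le
    rw [sub_zero, sub_zero, abs_le]
    constructor <;> linarith [hx.1, hx.2, le_abs_self a, neg_abs_le a, le_abs_self t]
  calc ENNReal.ofReal (2 * r * gaussianPDFReal 0 1 t)
      = ENNReal.ofReal (gaussianPDFReal 0 1 t) * volume (Icc (a - r) (a + r)) := by
        rw [volume_Icc, ← ENNReal.ofReal_mul (gaussianPDFReal_nonneg _ _ _)]
        ring_nf
    _ ≤ _ := ofReal_mul_volume_le_gaussianReal hb one_ne_zero

section

variable {Ω : Type*} [MeasurableSpace Ω] {P : Measure Ω}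

lemma ProbabilityTheory.iIndepFun.curry {ι κ 𝓧 : Type*} [MeasurableSpace 𝓧]
    {X : ι → κ → Ω → 𝓧} (mX : ∀ i j, Measurable (X i j))
    (h : iIndepFun (fun p : ι × κ => X p.1 p.2) P) :
    iIndepFun (fun i ω j => X i j ω) P := by
  have := h.isProbabilityMeasure
  have _ i j : IsProbabilityMeasure (P.map (X i j)) :=
    Measure.isProbabilityMeasure_map (mX i j).aemeasurable
  have hrow : ∀ i, P.map (fun ω j => X i j ω) = Measure.infinitePi fun j => P.map (X i j) :=
    fun i => (h.precomp (Prod.mk_right_injective i)).map_fun_eq_infinitePi_map (mX i)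
  have hsigma := (h.precomp (Equiv.sigmaEquivProd ι κ).injective).map_fun_eq_infinitePi_map
    fun p : (_ : ι) × κ => mX p.1 p.2
  rw [iIndepFun_iff_map_fun_eq_infinitePi_map fun i => measurable_pi_lambda _ (mX i)]
  simp_rw [hrow]
  rw [← Measure.infinitePi_map_piCurry (fun i j => P.map (X i j)), ← hsigma,
    Measure.map_map (MeasurableEquiv.measurable _) (by fun_prop)]
  rfl

lemma ProbabilityTheory.iIndepFun.measure_biInter_preimage_compl_le {ι E : Type*}
    [MeasurableSpace E] {Y : ι → Ω → E} (hY : iIndepFun Y P) (mY : ∀ i, Measurable (Y i))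
    {B : ι → Set E} (hB : ∀ i, MeasurableSet (B i)) {q : ENNReal} (hq : ∀ i, q ≤ P (Y i ⁻¹' B i))
    (T : Finset ι) :
    P (⋂ i ∈ T, Y i ⁻¹' (B i)ᶜ) ≤ (1 - q) ^ T.card := by
  have := hY.isProbabilityMeasure
  rw [iIndepFun_iff_measure_inter_preimage_eq_mul.mp hY T fun i _ => (hB i).compl,
    ← Finset.prod_const]
  refine Finset.prod_le_prod' fun i _ => ?_
  rw [preimage_compl, prob_compl_eq_one_sub (mY i (hB i))]
  exact tsub_le_tsub_left (hq i) 1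

lemma ENNReal.one_sub_ofReal_pow_le {q : ℝ} (hq : 0 ≤ q) (M : ℕ) :
    (1 - ENNReal.ofReal q) ^ M ≤ ENNReal.ofReal (exp (-(q * M))) := by
  calc (1 - ENNReal.ofReal q) ^ M = ENNReal.ofReal (1 - q) ^ M := by
        rw [ENNReal.ofReal_sub 1 hq, ENNReal.ofReal_one]
    _ ≤ ENNReal.ofReal (exp (-q)) ^ M := by
        gcongr; linarith [add_one_le_exp (-q)]
    _ = ENNReal.ofReal (exp (-(q * M))) := by
        rw [← ENNReal.ofReal_pow (exp_nonneg _), ← exp_nat_mul]; ring_nf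

lemma ProbabilityTheory.IndepFun.measure_preimage_le_of_forall_slice_le {α β : Type*}
    [MeasurableSpace α] [MeasurableSpace β] [IsProbabilityMeasure P] {X : Ω → α} {Y : Ω → β}
    (hXY : IndepFun X Y P) (hX : Measurable X) (hY : Measurable Y) {S : Set (α × β)}
    (hS : MeasurableSet S) {b : ENNReal} (hb : ∀ y, P (X ⁻¹' {x | (x, y) ∈ S}) ≤ b) :
    P ((fun ω => (X ω, Y ω)) ⁻¹' S) ≤ b := by
  have : IsProbabilityMeasure (P.map Y) := Measure.isProbabilityMeasure_map hY.aemeasurable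
  rw [← Measure.map_apply (hX.prodMk hY) hS,
    (indepFun_iff_map_prod_eq_prod_map_map hX.aemeasurable hY.aemeasurable).mp hXY,
    Measure.prod_apply_symm hS]
  calc ∫⁻ y, P.map X ((fun x => (x, y)) ⁻¹' S) ∂P.map Y ≤ ∫⁻ _, b ∂P.map Y :=
        lintegral_mono fun y => by
          rw [Measure.map_apply hX (measurable_prodMk_right hS)]; exact hb y
    _ = b := by simp

lemma ofReal_le_measure_forall_abs_sub_le {ι : Type*} [Fintype ι] {Y : ι → Ω → ℝ}
    (hY : iIndepFun Y P) (mY : ∀ i, Measurable (Y i)) (hlaw : ∀ i, P.map (Y i) = gaussianReal 0 1)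
    {a : ι → ℝ} {r t : ℝ} (hr : 0 ≤ r) (h : ∀ i, |a i| + r ≤ t) :
    ENNReal.ofReal ((2 * r * gaussianPDFReal 0 1 t) ^ Fintype.card ι) ≤
      P {ω | ∀ i, |Y i ω - a i| ≤ r} := by
  have hbox : {ω | ∀ i, |Y i ω - a i| ≤ r} =
      ⋂ i ∈ Finset.univ, Y i ⁻¹' Icc (a i - r) (a i + r) := by
    ext ω
    simp only [mem_ofPred_eq, Finset.mem_univ, iInter_true, mem_iInter, mem_preimage, mem_Icc,
      abs_le]
    exact forall_congr' fun i => by constructor <;> intro h <;> constructor <;> linarith [h.1, h.2]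
  rw [hbox, iIndepFun_iff_measure_inter_preimage_eq_mul.mp hY _ fun i _ => measurableSet_Icc,
    ENNReal.ofReal_pow (by have := gaussianPDFReal_nonneg 0 1 t; positivity), ← Finset.card_univ,
    ← Finset.prod_const]
  refine Finset.prod_le_prod' fun i _ => ?_
  rw [← Measure.map_apply (mY i) measurableSet_Icc, hlaw i]
  exact ofReal_le_gaussianReal_Icc (h i)

lemma measure_biInter_preimage_box_compl_le {ι : Type*} [Fintype ι] {G : ℕ → Ω → ι → ℝ}
    (hG : ∀ m l, Measurable fun ω => G m ω l)
    (hGiid : iIndepFun (fun (p : ℕ × ι) ω => G p.1 ω p.2) P)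
    (hGgauss : ∀ p : ℕ × ι, P.map (fun ω => G p.1 ω p.2) = gaussianReal 0 1)
    {a : ι → ℝ} {r t : ℝ} (hr : 0 ≤ r) (ha : ∀ l, |a l| + r ≤ t) (T : Finset ℕ) :
    P (⋂ m ∈ T, G m ⁻¹' {g | ∀ l, |g l - a l| ≤ r}ᶜ) ≤
      ENNReal.ofReal (exp (-((2 * r * gaussianPDFReal 0 1 t) ^ Fintype.card ι * T.card))) := by
  have hq : 0 ≤ (2 * r * gaussianPDFReal 0 1 t) ^ Fintype.card ι := by
    have := gaussianPDFReal_nonneg 0 1 t; positivity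
  have hhit : ∀ m, ENNReal.ofReal ((2 * r * gaussianPDFReal 0 1 t) ^ Fintype.card ι) ≤
      P (G m ⁻¹' {g | ∀ l, |g l - a l| ≤ r}) := fun m =>
    ofReal_le_measure_forall_abs_sub_le (hGiid.precomp (Prod.mk_right_injective m))
      (hG m) (fun l => hGgauss (m, l)) hr ha
  exact ((hGiid.curry hG).measure_biInter_preimage_compl_le
    (fun m => measurable_pi_lambda _ (hG m)) (fun _ => by measurability) hhit T).trans
    (ENNReal.one_sub_ofReal_pow_le hq _)

lemma measure_le_measure_exists_hit_add_exp {ι : Type*} [Fintype ι] [IsProbabilityMeasure P]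
    (Z : ι → ℝ) (Zhat : Ω → ι → ℝ) (hZhat : Measurable Zhat) (G : ℕ → Ω → ι → ℝ)
    (hG : ∀ m l, Measurable fun ω => G m ω l)
    (hGiid : iIndepFun (fun (p : ℕ × ι) ω => G p.1 ω p.2) P)
    (hGgauss : ∀ p : ℕ × ι, P.map (fun ω => G p.1 ω p.2) = gaussianReal 0 1)
    (hGindep : IndepFun (fun ω (p : ℕ × ι) => G p.1 ω p.2) Zhat P)
    {r s t : ℝ} (hr : 0 ≤ r) (hrst : s + r ≤ t) (M : ℕ) :
    P {ω | ∀ l, |Zhat ω l - Z l| < s} ≤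
      P {ω | ∃ m, 1 ≤ m ∧ m ≤ M ∧ ∀ l, |Zhat ω l + G m ω l - Z l| ≤ r} +
        ENNReal.ofReal (exp (-((2 * r * gaussianPDFReal 0 1 t) ^ Fintype.card ι * M))) := by
  let V : Ω → ℕ × ι → ℝ := fun ω p => G p.1 ω p.2
  let S : Set ((ℕ × ι → ℝ) × (ι → ℝ)) := {x | (∀ l, |x.2 l - Z l| < s) ∧
      ∀ m ∈ Finset.Icc 1 M, ¬ ∀ l, |x.1 (m, l) - (Z l - x.2 l)| ≤ r}
  have hsplit : {ω | ∀ l, |Zhat ω l - Z l| < s} ⊆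
      {ω | ∃ m, 1 ≤ m ∧ m ≤ M ∧ ∀ l, |Zhat ω l + G m ω l - Z l| ≤ r} ∪
        (fun ω => (V ω, Zhat ω)) ⁻¹' S := by
    intro ω hω
    by_cases hhit : ∃ m, 1 ≤ m ∧ m ≤ M ∧ ∀ l, |Zhat ω l + G m ω l - Z l| ≤ r
    · exact Or.inl hhit
    refine Or.inr ⟨hω, fun m hm hall => hhit ⟨m, (Finset.mem_Icc.mp hm).1,
      (Finset.mem_Icc.mp hm).2, fun l => ?_⟩⟩
    rw [show Zhat ω l + G m ω l - Z l = G m ω l - (Z l - Zhat ω l) by ring]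
    exact hall l
  have hmiss : P ((fun ω => (V ω, Zhat ω)) ⁻¹' S) ≤
      ENNReal.ofReal (exp (-((2 * r * gaussianPDFReal 0 1 t) ^ Fintype.card ι * M))) := by
    refine hGindep.measure_preimage_le_of_forall_slice_le
      (measurable_pi_lambda _ fun p => hG p.1 p.2) hZhat (by measurability) fun z => ?_
    by_cases hz : ∀ l, |z l - Z l| < s
    · have hslice : V ⁻¹' {v | (v, z) ∈ S} =
          ⋂ m ∈ Finset.Icc 1 M, G m ⁻¹' {g | ∀ l, |g l - (Z l - z l)| ≤ r}ᶜ := by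
        ext ω; simp [V, S, hz]
      rw [hslice]
      simpa using measure_biInter_preimage_box_compl_le hG hGiid hGgauss hr
        (fun l => by rw [abs_sub_comm]; linarith [hz l]) (Finset.Icc 1 M)
    · simp [S, hz]
  exact (measure_mono hsplit).trans ((measure_union_le _ _).trans (by gcongr))

lemma one_sub_sum_measureReal_le [IsProbabilityMeasure P] {ι : Type*} [Fintype ι] {A : Set Ω}
    {E : ι → Set Ω} (h : Aᶜ ⊆ ⋃ i, E i) : 1 - ∑ i, P.real (E i) ≤ P.real A := by
  have hcover : 1 ≤ P.real A + P.real Aᶜ := by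
    simpa [union_compl_self] using measureReal_union_le (μ := P) A Aᶜ
  linarith [(measureReal_mono h).trans (measureReal_iUnion_fintype_le (μ := P) E)]

lemma one_sub_card_mul_le_liminf {ι : Type*} [Fintype ι] {F : ℕ → ℝ} (hF : ∀ n, F n ≤ 1)
    {tail : ι → ℕ → ℝ} (htail : ∀ i n, tail i n ≤ 1) {e : ℕ → ℝ} (he : Tendsto e atTop (nhds 0))
    {b : ℝ} (hb : ∀ i, limsup (tail i) atTop ≤ b) (h : ∀ n, 1 - ∑ i, tail i n - e n ≤ F n) :
    1 - Fintype.card ι * b ≤ liminf F atTop := by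
  refine le_of_forall_pos_le_add fun η hη => ?_
  set δ := η / (Fintype.card ι + 1)
  have hδ : 0 < δ := by positivity
  have htail_ev : ∀ᶠ n in atTop, ∀ i, tail i n < b + δ := eventually_all.mpr fun i =>
    eventually_lt_of_limsup_lt ((hb i).trans_lt (lt_add_of_pos_right b hδ))
      (isBoundedUnder_of ⟨1, htail i⟩)
  rw [← sub_le_iff_le_add]
  refine le_liminf_of_le (isBoundedUnder_of ⟨1, hF⟩).isCoboundedUnder_ge ?_
  filter_upwards [htail_ev, he.eventually_lt_const hδ] with n htail_n he_n
  have hsum : ∑ i, tail i n ≤ Fintype.card ι * b + Fintype.card ι * δ := by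
    simpa using Finset.sum_le_sum fun i (_ : i ∈ Finset.univ) => (htail_n i).le
  have hη' : Fintype.card ι * δ + δ = η := by
    simp only [δ]; field_simp
  linarith [h n]

lemma one_sub_sum_tail_sub_exp_le_liminf {ι : Type*} [Fintype ι] [Nonempty ι]
    [IsProbabilityMeasure P]
    (Z : ι → ℝ) (Zhat : Ω → ι → ℝ) (hZhat : Measurable Zhat) (G : ℕ → Ω → ι → ℝ)
    (hG : ∀ m l, Measurable fun ω => G m ω l)
    (hGiid : iIndepFun (fun (p : ℕ × ι) ω => G p.1 ω p.2) P)
    (hGgauss : ∀ p : ℕ × ι, P.map (fun ω => G p.1 ω p.2) = gaussianReal 0 1)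
    (hGindep : IndepFun (fun ω (p : ℕ × ι) => G p.1 ω p.2) Zhat P)
    {s t : ℝ} (hst : s < t) {a : ℝ} (ha : 0 ≤ a) {err : ℕ → ℝ}
    (herr : ∀ M, err M = 1 / 2 *
      (a / (gaussianPDFReal 0 1 t ^ Fintype.card ι * M)) ^ (1 / (Fintype.card ι : ℝ))) :
    1 - ∑ l, P.real {ω | s ≤ |Zhat ω l - Z l|} - exp (-a) ≤
      liminf (fun M : ℕ => P.real
        {ω | ∃ m, 1 ≤ m ∧ m ≤ M ∧ ∀ l, |Zhat ω l + G m ω l - Z l| ≤ err M}) atTop := by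
  set L := Fintype.card ι
  set c := gaussianPDFReal 0 1 t ^ L
  have hL : L ≠ 0 := Fintype.card_ne_zero
  have hc : 0 < c := pow_pos (gaussianPDFReal_pos 0 1 t one_ne_zero) L
  have herr_nonneg : ∀ M, 0 ≤ err M := fun M => by rw [herr]; positivity
  have herr_tendsto : Tendsto err atTop (nhds 0) := by
    have hbase : Tendsto (fun M : ℕ => a / (c * M)) atTop (nhds 0) := by
      simpa only [div_div] using tendsto_const_div_atTop_nhds_zero_nat (a / c)
    have := (hbase.rpow_const (p := 1 / (L : ℝ)) (Or.inr (by positivity))).const_mul (1 / 2)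
    rwa [zero_rpow (one_div_ne_zero (Nat.cast_ne_zero.mpr hL)), mul_zero, ← funext herr] at this
  have hqM : ∀ M : ℕ, 1 ≤ M → (2 * err M * gaussianPDFReal 0 1 t) ^ L * M = a := by
    intro M hM
    have hM' : (0 : ℝ) < M := by exact_mod_cast hM
    rw [mul_pow, herr, ← mul_assoc, mul_one_div_cancel two_ne_zero, one_mul, one_div,
      rpow_inv_natCast_pow (div_nonneg ha (mul_pos hc hM').le) hL]
    change a / (c * M) * c * M = a
    field_simp
  refine le_liminf_of_le
    (isBoundedUnder_of ⟨1, fun M => measureReal_le_one⟩).isCoboundedUnder_ge ?_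
  filter_upwards [herr_tendsto.eventually_le_const (sub_pos.mpr hst), eventually_ge_atTop 1]
    with M hM hM1
  have key := measure_le_measure_exists_hit_add_exp Z Zhat hZhat G hG hGiid hGgauss hGindep
    (herr_nonneg M) (by linarith : s + err M ≤ t) M
  rw [hqM M hM1] at key
  have := ENNReal.toReal_mono (by finiteness) key
  rw [ENNReal.toReal_add (measure_ne_top _ _) ENNReal.ofReal_ne_top,
    ENNReal.toReal_ofReal (exp_nonneg _)] at this
  have hunion := one_sub_sum_measureReal_le (P := P) (A := {ω | ∀ l, |Zhat ω l - Z l| < s})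
    (E := fun l => {ω | s ≤ |Zhat ω l - Z l|}) fun ω hω => by simpa using hω
  simp only [measureReal_def] at hunion ⊢
  linarith

end

theorem resampled_fisher_z_min_max_coverage_general
    (L : ℕ) (hL : 1 ≤ L) (Z : Fin L → ℝ)
    {Ω : ℕ → Type*} [∀ n, MeasurableSpace (Ω n)]
    (P : ∀ n, Measure (Ω n)) [∀ n, IsProbabilityMeasure (P n)]
    (Zhat : ∀ n, Ω n → Fin L → ℝ)
    (hZhatMeas : ∀ n, Measurable (Zhat n))
    (G : ∀ n, ℕ → Ω n → Fin L → ℝ)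
    (hGmeas : ∀ n m l, Measurable (fun ω => G n m ω l))
    (hGiid : ∀ n, ProbabilityTheory.iIndepFun
      (fun (p : ℕ × Fin L) (ω : Ω n) => G n p.1 ω p.2) (P n))
    (hGgauss : ∀ n (p : ℕ × Fin L),
      Measure.map (fun ω => G n p.1 ω p.2) (P n) = ProbabilityTheory.gaussianReal 0 1)
    (hGindepData : ∀ n, ProbabilityTheory.IndepFun
      (fun (ω : Ω n) (p : ℕ × Fin L) => G n p.1 ω p.2) (Zhat n) (P n))
    (htail : ∀ (l : Fin L) (z : ℝ), 0 < z →
      Filter.limsup (fun n => (P n {ω | z ≤ |Zhat n ω l - Z l|}).toReal)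
        Filter.atTop ≤ 2 * (1 - stdGaussianCDF z))
    (ν : ℝ)
    (zν : ℝ) (hzν0 : 0 < zν) (hzν : stdGaussianCDF zν = 1 - ν / (2 * L))
    (c : ℝ) (hc : c = (2 * Real.pi) ^ (-(L : ℝ) / 2) * Real.exp (-((L : ℝ) / 2) * zν ^ 2))
    (err : ℕ → ℕ → ℝ)
    (herr : ∀ n M, err n M = (1 / 2) * (2 * Real.log n / (c * M)) ^ (1 / (L : ℝ))) :
    1 - ν ≤
      Filter.liminf (fun n : ℕ =>
        Filter.liminf (fun M : ℕ =>
          (P n {ω | ∃ m, 1 ≤ m ∧ m ≤ M ∧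
            ∀ l, |Zhat n ω l + G n m ω l - Z l| ≤ err n M}).toReal)
          Filter.atTop) Filter.atTop := by
  have hc' : c = gaussianPDFReal 0 1 zν ^ L :=
    hc.trans (rpow_two_pi_mul_exp_eq_gaussianPDFReal_pow L zν)
  have : Nonempty (Fin L) := ⟨⟨0, hL⟩⟩
  set F := fun n : ℕ => liminf (fun M : ℕ => (P n {ω | ∃ m, 1 ≤ m ∧ m ≤ M ∧
    ∀ l, |Zhat n ω l + G n m ω l - Z l| ≤ err n M}).toReal) atTop
  have hF : ∀ n, F n ≤ 1 := fun n => liminf_le_of_frequently_le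
    (.of_forall fun _ => measureReal_le_one) (isBoundedUnder_of ⟨0, fun _ => measureReal_nonneg⟩)
  have hexp : Tendsto (fun n : ℕ => exp (-(2 * log n))) atTop (nhds 0) :=
    tendsto_exp_atBot.comp <| tendsto_neg_atTop_atBot.comp <|
      (tendsto_log_atTop.comp tendsto_natCast_atTop_atTop).const_mul_atTop two_pos
  refine one_sub_le_of_forall_lt_of_stdGaussianCDF_eq (Nat.cast_pos.mpr hL) hzν0 hzν
    fun s hs => ?_
  simpa using one_sub_card_mul_le_liminf hF (fun _ _ => measureReal_le_one) hexp
    (fun l => htail l s hs.1) fun n =>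
      one_sub_sum_tail_sub_exp_le_liminf Z (Zhat n) (hZhatMeas n) (G n) (hGmeas n) (hGiid n)
        (hGgauss n) (hGindepData n) hs.2 (by positivity : 0 ≤ 2 * log n) (err := err n)
        fun M => by rw [herr, hc', Fintype.card_fin]

/-- **Corollary 1 of the paper.** The resampling guarantee for Fisher's
z-transformed partial correlations (unit scales): if `limsup_n P(|Ẑ_{n,l} − Z_l| ≥ z) ≤
2(1 − Φ(z))` for every coordinate `l` and `z > 0`, and `Ẑ_n^{[m]} = Ẑ_n + G_{n,m}` with
i.i.d. standard Gaussian noise independent of the data, then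
`liminf_n liminf_M P(min_{1≤m≤M} max_l |Ẑ_{n,l}^{[m]} − Z_l| ≤ err_n(M,ν)) ≥ 1 − ν`,
where `err_n(M,ν) = (1/2)(2 log n /(c(ν) M))^{1/L}` and
`c(ν) = (2π)^{−L/2} exp(−(L/2) z_ν²)` with `Φ(z_ν) = 1 − ν/(2L)`. -/
theorem resampled_fisher_z_min_max_coverage
    (L : ℕ) (hL : 1 ≤ L) (Z : Fin L → ℝ)
    {Ω : ℕ → Type*} [∀ n, MeasurableSpace (Ω n)]
    (P : ∀ n, Measure (Ω n)) [∀ n, IsProbabilityMeasure (P n)]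
    (Zhat : ∀ n, Ω n → Fin L → ℝ)
    (hZhatMeas : ∀ n, Measurable (Zhat n))
    (G : ∀ n, ℕ → Ω n → Fin L → ℝ)
    (hGmeas : ∀ n m l, Measurable (fun ω => G n m ω l))
    (hGiid : ∀ n, ProbabilityTheory.iIndepFun
      (fun (p : ℕ × Fin L) (ω : Ω n) => G n p.1 ω p.2) (P n))
    (hGgauss : ∀ n (p : ℕ × Fin L),
      Measure.map (fun ω => G n p.1 ω p.2) (P n) = ProbabilityTheory.gaussianReal 0 1)
    (hGindepData : ∀ n, ProbabilityTheory.IndepFun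
      (fun (ω : Ω n) (p : ℕ × Fin L) => G n p.1 ω p.2) (Zhat n) (P n))
    (htail : ∀ (l : Fin L) (z : ℝ), 0 < z →
      Filter.limsup (fun n => (P n {ω | z ≤ |Zhat n ω l - Z l|}).toReal)
        Filter.atTop ≤ 2 * (1 - stdGaussianCDF z))
    (ν : ℝ) (hν0 : 0 < ν) (hν : ν ≤ 1 / 2)
    (zν : ℝ) (hzν0 : 0 < zν) (hzν : stdGaussianCDF zν = 1 - ν / (2 * L))
    (c : ℝ) (hc : c = (2 * Real.pi) ^ (-(L : ℝ) / 2) * Real.exp (-((L : ℝ) / 2) * zν ^ 2))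
    (err : ℕ → ℕ → ℝ)
    (herr : ∀ n M, err n M = (1 / 2) * (2 * Real.log n / (c * M)) ^ (1 / (L : ℝ))) :
    1 - ν ≤
      Filter.liminf (fun n : ℕ =>
        Filter.liminf (fun M : ℕ =>
          (P n {ω | ∃ m, 1 ≤ m ∧ m ≤ M ∧
            ∀ l, |Zhat n ω l + G n m ω l - Z l| ≤ err n M}).toReal)
          Filter.atTop) Filter.atTop :=
  resampled_fisher_z_min_max_coverage_general L hL Z P Zhat hZhatMeas G hGmeas hGiid hGgauss
    hGindepData htail ν zν hzν0 hzν c hc err herr
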